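/- Let m be a positive natural number and θ a real number with 0 < θ < π. If sin((j+1)θ) ≥ 0 for every j with 1 ≤ j ≤ m, then θ ≤ π/(m+1); in particular 2 cos θ ≥ 2 cos(π/(m+1)). -/
import Mathlib


/-- If `0 < θ < π` and `sin ((j+1)θ) ≥ 0` for every `1 ≤ j ≤ m` (with `m ≥ 1`),
then `θ ≤ π/(m+1)`; in particular `2 cos θ ≥ 2 cos (π/(m+1))`. -/
theorem theta_le_of_sin_nonneg (m : ℕ) (hm : 1 ≤ m) (θ : ℝ)
    (hθ0 : 0 < θ) (hθπ : θ < Real.pi)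
    (h : ∀ j : ℕ, 1 ≤ j → j ≤ m → 0 ≤ Real.sin ((j + 1) * θ)) :
    θ ≤ Real.pi / (m + 1) ∧ 2 * Real.cos (Real.pi / (m + 1)) ≤ 2 * Real.cos θ := by
  have hm1 : (0:ℝ) < (m:ℝ) + 1 := by positivity
  have hle : θ ≤ Real.pi / (m + 1) := by
    by_contra hcon
    push_neg at hcon
    have hπ : Real.pi < ((m:ℝ) + 1) * θ := by
      rw [div_lt_iff₀ hm1] at hcon; linarith
    classical
    have hP : ∃ j : ℕ, Real.pi < ((j:ℝ) + 1) * θ := ⟨m, hπ⟩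
    set k := Nat.find hP with hkdef
    have hk1 : Real.pi < ((k:ℝ) + 1) * θ := Nat.find_spec hP
    have hkpos : 1 ≤ k := by
      rcases Nat.eq_zero_or_pos k with h0 | h1
      · rw [h0] at hk1; push_cast at hk1; linarith
      · exact h1
    have hkm : k ≤ m := Nat.find_le hπ
    have hmin : ¬ Real.pi < (((k-1:ℕ):ℝ) + 1) * θ := Nat.find_min hP (by omega)
    push_neg at hmin
    have hcast : (((k-1:ℕ):ℝ) + 1) = (k:ℝ) := by
      have : (k - 1 : ℕ) + 1 = k := by omega
      rw [← this]; push_cast; ring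
    rw [hcast] at hmin
    -- π < (k+1)θ < 2π, so sin((k+1)θ) < 0
    have hub : ((k:ℝ) + 1) * θ < 2 * Real.pi := by nlinarith
    have hx : Real.sin (((k:ℝ) + 1) * θ - Real.pi) > 0 :=
      Real.sin_pos_of_pos_of_lt_pi (by linarith) (by linarith)
    have hsin : Real.sin (((k:ℝ) + 1) * θ) < 0 := by
      have := Real.sin_pi_sub (((k:ℝ) + 1) * θ)
      have heq : Real.sin (((k:ℝ) + 1) * θ - Real.pi) = - Real.sin (((k:ℝ) + 1) * θ) := by
        rw [Real.sin_sub]; simp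
      linarith [heq ▸ hx]
    have := h k hkpos hkm
    linarith
  refine ⟨hle, ?_⟩
  have h1 : Real.pi / (m + 1) ≤ Real.pi := by
    rw [div_le_iff₀ hm1]
    nlinarith [Real.pi_pos]
  have := Real.cos_le_cos_of_nonneg_of_le_pi hθ0.le h1 hle
  linarith
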